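/- Fix δ ∈ ℝ. Let 0<β<mn with the splitting β_i = β/m for every i, let p⃗ be a vector of exponents, and let δ̃ < τ where τ = (β−mn)(1−1/m) + δ/m. If a pair of weights (w,v⃗) satisfies the local condition, then (w,v⃗) satisfies the global condition. -/

import Mathlib

open MeasureTheory Metric Set
open scoped ENNReal NNReal BigOperators
open scoped Classical

noncomputable section

/-- Euclidean space `ℝⁿ`. -/
abbrev Rn (n : ℕ) : Type := EuclideanSpace ℝ (Fin n)

/-- The `q`-"norm" of a nonnegative function with respect to the measure `μ`,
for `q ∈ [1,∞]`; `q = ∞` gives the essential supremum. -/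
noncomputable def LpNormE {α : Type*} [MeasurableSpace α] (μ : Measure α)
    (g : α → ℝ≥0∞) (q : ℝ≥0∞) : ℝ≥0∞ :=
  if q = ∞ then essSup g μ else (∫⁻ x, g x ^ q.toReal ∂μ) ^ (1 / q.toReal)

/-- Conjugate exponent in `[1,∞]`. -/
noncomputable def conjE (q : ℝ≥0∞) : ℝ≥0∞ :=
  if q = 1 then ∞ else if q = ∞ then 1 else ENNReal.ofReal (q.toReal / (q.toReal - 1))

/-- Real-valued conjugate exponent of `q ∈ (1,∞]`. -/
noncomputable def conjR (q : ℝ≥0∞) : ℝ :=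
  if q = ∞ then 1 else q.toReal / (q.toReal - 1)

/-- A weight: measurable, a.e. positive and finite, and locally integrable. -/
def IsWeight (n : ℕ) (u : Rn n → ℝ≥0∞) : Prop :=
  Measurable u ∧ (∀ᵐ x ∂(volume : Measure (Rn n)), 0 < u x ∧ u x < ∞) ∧
    ∀ (c : Rn n) (R : ℝ), 0 < R → ∫⁻ x in ball c R, u x < ∞

/-- The `i`-th factor in the `H_m(p,β,δ̃)` condition over the ball `B(c,R)`
(`δ` is the fixed ambient parameter, `β i` the splitting of `β`). For `p i = 1`
the conjugate exponent is `∞` and the factor is an essential supremum. -/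
noncomputable def HmFactor (n m : ℕ) (δ : ℝ) (β : Fin m → ℝ) (p : Fin m → ℝ≥0∞)
    (v : Fin m → Rn n → ℝ≥0∞) (c : Rn n) (R : ℝ) (i : Fin m) : ℝ≥0∞ :=
  LpNormE volume
    (fun y => (v i y)⁻¹ *
      (volume (ball c R) ^ (n : ℝ)⁻¹ + edist c y) ^ (-((n : ℝ) - β i + δ / (m : ℝ))))
    (conjE (p i))

/-- The left-hand side of the `H_m(p,β,δ̃)` condition over the ball `B(c,R)`. -/
noncomputable def HmLHS (n m : ℕ) (δ δt : ℝ) (β : Fin m → ℝ) (p : Fin m → ℝ≥0∞)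
    (w : Rn n → ℝ≥0∞) (v : Fin m → Rn n → ℝ≥0∞) (c : Rn n) (R : ℝ) : ℝ≥0∞ :=
  essSup w (volume.restrict (ball c R)) / volume (ball c R) ^ ((δt - δ) / (n : ℝ)) *
    ∏ i, HmFactor n m δ β p v c R i

/-- The class `H_m(p,β,δ̃)`, with fixed ambient parameter `δ` and splitting `β i`. -/
def MemHm (n m : ℕ) (δ δt : ℝ) (β : Fin m → ℝ) (p : Fin m → ℝ≥0∞)
    (w : Rn n → ℝ≥0∞) (v : Fin m → Rn n → ℝ≥0∞) : Prop :=
  ∃ C : ℝ≥0∞, C ≠ ∞ ∧ ∀ (c : Rn n) (R : ℝ), 0 < R → HmLHS n m δ δt β p w v c R ≤ C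

/-- The reverse Hölder class `RH_s`. -/
def MemRH (n : ℕ) (s : ℝ) (u : Rn n → ℝ≥0∞) : Prop :=
  ∃ C : ℝ≥0∞, C ≠ ∞ ∧ ∀ (c : Rn n) (R : ℝ), 0 < R →
    ((volume (ball c R))⁻¹ * ∫⁻ x in ball c R, u x ^ s) ^ s⁻¹ ≤
      C * ((volume (ball c R))⁻¹ * ∫⁻ x in ball c R, u x)

/-- The reverse Hölder class `RH_∞`. -/
def MemRHinf (n : ℕ) (u : Rn n → ℝ≥0∞) : Prop :=
  ∃ C : ℝ≥0∞, C ≠ ∞ ∧ ∀ (c : Rn n) (R : ℝ), 0 < R →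
    essSup u (volume.restrict (ball c R)) ≤
      C * ((volume (ball c R))⁻¹ * ∫⁻ x in ball c R, u x)

/-- The Muckenhoupt class `A_1`. -/
def MemA1 (n : ℕ) (u : Rn n → ℝ≥0∞) : Prop :=
  ∃ C : ℝ≥0∞, C ≠ ∞ ∧ ∀ (c : Rn n) (R : ℝ), 0 < R →
    (volume (ball c R))⁻¹ * ∫⁻ x in ball c R, u x ≤
      C * essInf u (volume.restrict (ball c R))

/-- A doubling function: the integral over `2B` is controlled by the one over `B`. -/
def Doubling (n : ℕ) (u : Rn n → ℝ≥0∞) : Prop :=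
  ∃ C : ℝ≥0∞, C ≠ ∞ ∧ ∀ (c : Rn n) (R : ℝ), 0 < R →
    ∫⁻ x in ball c (2 * R), u x ≤ C * ∫⁻ x in ball c R, u x

/-- The `i`-th factor in the global condition over the ball `B(c,R)`. -/
noncomputable def GlobalFactor (n m : ℕ) (δ : ℝ) (β : Fin m → ℝ) (p : Fin m → ℝ≥0∞)
    (v : Fin m → Rn n → ℝ≥0∞) (c : Rn n) (R : ℝ) (i : Fin m) : ℝ≥0∞ :=
  LpNormE (volume.restrict (ball c R)ᶜ)
    (fun y => (v i y)⁻¹ * edist c y ^ (-((n : ℝ) - β i + δ / (m : ℝ)))) (conjE (p i))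

/-- The global condition associated with the class `H_m(p,β,δ̃)`. -/
def GlobalCond (n m : ℕ) (δ δt : ℝ) (β : Fin m → ℝ) (p : Fin m → ℝ≥0∞)
    (w : Rn n → ℝ≥0∞) (v : Fin m → Rn n → ℝ≥0∞) : Prop :=
  ∃ C : ℝ≥0∞, C ≠ ∞ ∧ ∀ (c : Rn n) (R : ℝ), 0 < R →
    essSup w (volume.restrict (ball c R)) / volume (ball c R) ^ ((δt - δ) / (n : ℝ)) *
      ∏ i, GlobalFactor n m δ β p v c R i ≤ C

/-- The local condition associated with the class `H_m(p,β,δ̃)`; here `β` is the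
total (scalar) parameter. -/
def LocalCond (n m : ℕ) (δt β : ℝ) (p : Fin m → ℝ≥0∞)
    (w : Rn n → ℝ≥0∞) (v : Fin m → Rn n → ℝ≥0∞) : Prop :=
  ∃ C : ℝ≥0∞, C ≠ ∞ ∧ ∀ (c : Rn n) (R : ℝ), 0 < R →
    essSup w (volume.restrict (ball c R)) /
        volume (ball c R) ^ (δt / (n : ℝ) + (∑ i, (p i)⁻¹).toReal - β / (n : ℝ)) *
      ∏ i, (if p i = 1 then essSup (fun x => (v i x)⁻¹) (volume.restrict (ball c R))
        else ((volume (ball c R))⁻¹ * ∫⁻ x in ball c R, (v i x)⁻¹ ^ conjR (p i)) ^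
          (conjR (p i))⁻¹) ≤ C

/-- The multilinear class `A_{p⃗,∞}`. -/
def MemApInf (n m : ℕ) (p : Fin m → ℝ≥0∞) (v : Fin m → Rn n → ℝ≥0∞) : Prop :=
  ∃ C : ℝ≥0∞, C ≠ ∞ ∧ ∀ (c : Rn n) (R : ℝ), 0 < R →
    essSup (fun x => ∏ i, v i x) (volume.restrict (ball c R)) *
      ∏ i, (if p i = 1 then essSup (fun x => (v i x)⁻¹) (volume.restrict (ball c R))
        else ((volume (ball c R))⁻¹ * ∫⁻ x in ball c R, (v i x)⁻¹ ^ conjR (p i)) ^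
          (conjR (p i))⁻¹) ≤ C

/-- The multilinear class `A_{p⃗,q}` for `0 < q < ∞`. -/
def MemApq (n m : ℕ) (p : Fin m → ℝ≥0∞) (q : ℝ) (w : Fin m → Rn n → ℝ≥0∞) : Prop :=
  ∃ C : ℝ≥0∞, C ≠ ∞ ∧ ∀ (c : Rn n) (R : ℝ), 0 < R →
    ((volume (ball c R))⁻¹ * ∫⁻ x in ball c R, ∏ i, w i x ^ q) ^ (1 / q) *
      ∏ i, (if p i = 1 then essSup (fun x => (w i x)⁻¹) (volume.restrict (ball c R))
        else ((volume (ball c R))⁻¹ * ∫⁻ x in ball c R, (w i x)⁻¹ ^ conjR (p i)) ^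
          (conjR (p i))⁻¹) ≤ C

/-- The multilinear Muckenhoupt class `A_{r⃗}`. -/
def MemAvec (n m : ℕ) (r : Fin m → ℝ≥0∞) (u : Fin m → Rn n → ℝ≥0∞) : Prop :=
  ∃ C : ℝ≥0∞, C ≠ ∞ ∧ ∀ (c : Rn n) (R : ℝ), 0 < R →
    ((volume (ball c R))⁻¹ *
        ∫⁻ x in ball c R, ∏ i, u i x ^ ((∑ j, (r j)⁻¹).toReal⁻¹ * ((r i)⁻¹).toReal)) ^
        (∑ j, (r j)⁻¹).toReal *
      ∏ i, (if r i = 1 then essSup (fun x => (u i x)⁻¹) (volume.restrict (ball c R))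
        else ((volume (ball c R))⁻¹ * ∫⁻ x in ball c R, u i x ^ (1 - conjR (r i))) ^
          (conjR (r i))⁻¹) ≤ C

/-- Product Lebesgue measure on `(ℝⁿ)^m`. -/
noncomputable def pim (n m : ℕ) : Measure (Fin m → Rn n) :=
  Measure.pi fun _ => (volume : Measure (Rn n))

/-- Size condition for a multilinear fractional kernel of order `α`. -/
def SizeCond (n m : ℕ) (α : ℝ) (K : Rn n → (Fin m → Rn n) → ℝ) : Prop :=
  ∃ C : ℝ, 0 < C ∧ ∀ (x : Rn n) (y : Fin m → Rn n), (∑ i, dist x (y i)) ≠ 0 →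
    |K x y| ≤ C * (∑ i, dist x (y i)) ^ (α - (m : ℝ) * (n : ℝ))

/-- Smoothness condition with exponent `γ` for a multilinear fractional kernel. -/
def SmoothCond (n m : ℕ) (α γ : ℝ) (K : Rn n → (Fin m → Rn n) → ℝ) : Prop :=
  ∃ C : ℝ, 0 < C ∧ ∀ (x x' : Rn n) (y : Fin m → Rn n),
    2 * dist x x' < ∑ i, dist x (y i) →
    |K x y - K x' y| ≤ C * dist x x' ^ γ * (∑ i, dist x (y i)) ^ (α - (m : ℝ) * (n : ℝ) - γ)

/-- The Lipschitz space `Λ(δ)`. -/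
def MemLip (n : ℕ) (δ : ℝ) (b : Rn n → ℝ) : Prop :=
  ∃ C : ℝ, 0 ≤ C ∧ ∀ x y : Rn n, |b x - b y| ≤ C * dist x y ^ δ

/-- The multilinear integral operator with kernel `K`. -/
noncomputable def TOp (n m : ℕ) (K : Rn n → (Fin m → Rn n) → ℝ)
    (f : Fin m → Rn n → ℝ) (x : Rn n) : ℝ :=
  ∫ y, K x y * ∏ i, f i (y i) ∂pim n m

/-- The sum-type multilinear commutator `T_{α,b}`. -/
noncomputable def TSumComm (n m : ℕ) (K : Rn n → (Fin m → Rn n) → ℝ)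
    (b : Fin m → Rn n → ℝ) (f : Fin m → Rn n → ℝ) (x : Rn n) : ℝ :=
  ∑ j, ∫ y, (b j x - b j (y j)) * K x y * ∏ i, f i (y i) ∂pim n m

/-- The product-type multilinear commutator `𝒯_{α,b}` (integral representation). -/
noncomputable def TProdComm (n m : ℕ) (K : Rn n → (Fin m → Rn n) → ℝ)
    (b : Fin m → Rn n → ℝ) (f : Fin m → Rn n → ℝ) (x : Rn n) : ℝ :=
  ∫ y, K x y * ∏ i, (b i x - b i (y i)) * f i (y i) ∂pim n m

/-- `‖f · v‖_q` for a real function `f` and a weight `v`. -/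
noncomputable def wLpNorm (n : ℕ) (f : Rn n → ℝ) (v : Rn n → ℝ≥0∞) (q : ℝ≥0∞) : ℝ≥0∞ :=
  LpNormE volume (fun x => ENNReal.ofReal |f x| * v x) q

/-- The (nonnegative) multilinear fractional integral `I_{a,m}`. -/
noncomputable def IfracE (n m : ℕ) (a : ℝ) (g : Fin m → Rn n → ℝ≥0∞) (x : Rn n) : ℝ≥0∞ :=
  ∫⁻ y, (∑ i, edist x (y i)) ^ (a - (m : ℝ) * (n : ℝ)) * ∏ i, g i (y i) ∂pim n m

/-- Commuting with `b` in the `j`-th entry. -/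
noncomputable def commAt (n m : ℕ) (T : (Fin m → Rn n → ℝ) → Rn n → ℝ)
    (g : Rn n → ℝ) (j : Fin m) (f : Fin m → Rn n → ℝ) (x : Rn n) : ℝ :=
  g x * T f x - T (Function.update f j fun z => g z * f j z) x

/-- The iterated commutator `[b_k, … [b_2, [b_1, T]_1]_2 … ]_k`. -/
noncomputable def iterComm (n m : ℕ) (T : (Fin m → Rn n → ℝ) → Rn n → ℝ)
    (b : Fin m → Rn n → ℝ) : ℕ → (Fin m → Rn n → ℝ) → Rn n → ℝ
  | 0 => T
  | k + 1 => fun f x =>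
      if h : k < m then commAt n m (iterComm n m T b k) (b ⟨k, h⟩) ⟨k, h⟩ f x
      else iterComm n m T b k f x

end
section AuxLemmas

open ENNReal

variable {α : Type*} [MeasurableSpace α]

lemma my_rpow_sum {x : ℝ≥0∞} (hx0 : x ≠ 0) (hxt : x ≠ ∞) {ι : Type*} (s : Finset ι)
    (e : ι → ℝ) : x ^ (∑ i ∈ s, e i) = ∏ i ∈ s, x ^ e i := by
  induction s using Finset.cons_induction with
  | empty => simp
  | cons i s his ih =>
    rw [Finset.sum_cons, Finset.prod_cons, ENNReal.rpow_add _ _ hx0 hxt, ih]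

lemma my_prod_tsum : ∀ (m : ℕ) (x : Fin m → ℕ → ℝ≥0∞),
    (∏ i, ∑' k, x i k) = ∑' f : Fin m → ℕ, ∏ i, x i (f i) := by
  intro m
  induction m with
  | zero =>
    intro x
    rw [tsum_eq_single (default : Fin 0 → ℕ)
      (fun c hc => absurd (Subsingleton.elim c default) hc)]
    simp
  | succ M ih =>
    intro x
    have key : ∀ q : ℕ × (Fin M → ℕ),
        (∏ i, x i ((Fin.consEquiv fun _ => ℕ) q i)) = x 0 q.1 * ∏ i, x i.succ (q.2 i) := by
      intro q
      rw [Fin.prod_univ_succ]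
      simp [Fin.consEquiv]
    calc (∏ i, ∑' k, x i k)
        = (∑' k, x 0 k) * ∏ i : Fin M, ∑' k, x i.succ k := Fin.prod_univ_succ _
      _ = (∑' k, x 0 k) * ∑' g : Fin M → ℕ, ∏ i, x i.succ (g i) := by
          rw [ih (fun i k => x i.succ k)]
      _ = ∑' a : ℕ, x 0 a * ∑' g : Fin M → ℕ, ∏ i, x i.succ (g i) :=
          ENNReal.tsum_mul_right.symm
      _ = ∑' (a : ℕ) (g : Fin M → ℕ), x 0 a * ∏ i, x i.succ (g i) := by
          congr 1; funext a; exact ENNReal.tsum_mul_left.symm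
      _ = ∑' q : ℕ × (Fin M → ℕ), x 0 q.1 * ∏ i, x i.succ (q.2 i) := (ENNReal.tsum_prod' (f := fun q : ℕ × (Fin M → ℕ) => x 0 q.1 * ∏ i, x i.succ (q.2 i))).symm
      _ = ∑' q : ℕ × (Fin M → ℕ), ∏ i, x i ((Fin.consEquiv fun _ => ℕ) q i) := by
          congr 1; funext q; exact (key q).symm
      _ = ∑' f : Fin (M + 1) → ℕ, ∏ i, x i (f i) :=
          Equiv.tsum_eq (Fin.consEquiv fun _ => ℕ) (fun f => ∏ i, x i (f i))

lemma my_tsum_rpow_le (a : ℕ → ℝ≥0∞) {r : ℝ} (h0 : 0 < r) (h1 : r ≤ 1) :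
    (∑' k, a k) ^ r ≤ ∑' k, a k ^ r := by
  have hrne : r ≠ 0 := h0.ne'
  have hfin : ∀ s : Finset ℕ, (∑ k ∈ s, a k) ^ r ≤ ∑ k ∈ s, a k ^ r := by
    intro s
    induction s using Finset.cons_induction with
    | empty => simp [ENNReal.zero_rpow_of_pos h0]
    | cons i s his ih =>
      rw [Finset.sum_cons, Finset.sum_cons]
      exact le_trans (ENNReal.rpow_add_le_add_rpow _ _ h0.le h1) (add_le_add le_rfl ih)
  have key : (∑' k, a k) ≤ (∑' k, a k ^ r) ^ r⁻¹ := by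
    rw [ENNReal.tsum_eq_iSup_sum]
    refine iSup_le fun s => ?_
    have h2 : (∑ k ∈ s, a k) = ((∑ k ∈ s, a k) ^ r) ^ r⁻¹ := by
      rw [← ENNReal.rpow_mul, mul_inv_cancel₀ hrne, ENNReal.rpow_one]
    rw [h2]
    exact ENNReal.rpow_le_rpow (le_trans (hfin s) (ENNReal.sum_le_tsum s))
      (by positivity)
  calc (∑' k, a k) ^ r ≤ ((∑' k, a k ^ r) ^ r⁻¹) ^ r := ENNReal.rpow_le_rpow key h0.le
    _ = ∑' k, a k ^ r := by
      rw [← ENNReal.rpow_mul, inv_mul_cancel₀ hrne, ENNReal.rpow_one]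

lemma conjE_ne_top {q : ℝ≥0∞} (hq : q ≠ 1) : conjE q ≠ ∞ := by
  rw [conjE, if_neg hq]
  split <;> simp

lemma conjR_pos {q : ℝ≥0∞} (h1 : 1 ≤ q) (hq : q ≠ 1) : 0 < conjR q := by
  rw [conjR]
  rcases eq_or_ne q ∞ with rfl | hfin
  · simp
  · rw [if_neg hfin]
    have ht : 1 < q.toReal := by
      have := (ENNReal.toReal_lt_toReal (by simp) hfin).mpr (lt_of_le_of_ne h1 (Ne.symm hq))
      simpa using this
    have : 0 < q.toReal - 1 := by linarith
    positivity

lemma one_le_conjR {q : ℝ≥0∞} (h1 : 1 ≤ q) (hq : q ≠ 1) : 1 ≤ conjR q := by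
  rw [conjR]
  rcases eq_or_ne q ∞ with rfl | hfin
  · simp
  · rw [if_neg hfin]
    have ht : 1 < q.toReal := by
      have := (ENNReal.toReal_lt_toReal (by simp) hfin).mpr (lt_of_le_of_ne h1 (Ne.symm hq))
      simpa using this
    rw [le_div_iff₀ (by linarith)]
    linarith

lemma conjE_toReal {q : ℝ≥0∞} (h1 : 1 ≤ q) (hq : q ≠ 1) : (conjE q).toReal = conjR q := by
  rw [conjE, conjR, if_neg hq]
  rcases eq_or_ne q ∞ with rfl | hfin
  · simp
  · rw [if_neg hfin, if_neg hfin, ENNReal.toReal_ofReal]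
    have := conjR_pos h1 hq
    rw [conjR, if_neg hfin] at this
    exact this.le

lemma one_le_conjE {q : ℝ≥0∞} (h1 : 1 ≤ q) : 1 ≤ conjE q := by
  rcases eq_or_ne q 1 with rfl | hq
  · simp [conjE]
  · have h := one_le_conjR h1 hq
    rw [conjE, if_neg hq]
    rcases eq_or_ne q ∞ with rfl | hfin
    · simp
    · rw [if_neg hfin]
      rw [conjR, if_neg hfin] at h
      exact ENNReal.one_le_ofReal.mpr h

lemma conjE_ne_zero {q : ℝ≥0∞} (h1 : 1 ≤ q) : conjE q ≠ 0 :=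
  (lt_of_lt_of_le one_pos (one_le_conjE h1)).ne'

lemma LpNormE_mono_ae {μ : Measure α} {g h : α → ℝ≥0∞} {q : ℝ≥0∞} (hgh : g ≤ᵐ[μ] h) :
    LpNormE μ g q ≤ LpNormE μ h q := by
  rw [LpNormE, LpNormE]
  split
  · exact essSup_mono_ae hgh
  · refine ENNReal.rpow_le_rpow (lintegral_mono_ae (hgh.mono fun x hx =>
      ENNReal.rpow_le_rpow hx ENNReal.toReal_nonneg)) (by positivity)

lemma LpNormE_mono_restrict {μ : Measure α} {s t : Set α} (hst : s ⊆ t) (g : α → ℝ≥0∞)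
    (q : ℝ≥0∞) : LpNormE (μ.restrict s) g q ≤ LpNormE (μ.restrict t) g q := by
  rw [LpNormE, LpNormE]
  split
  · exact essSup_mono_measure' (Measure.restrict_mono hst le_rfl)
  · exact ENNReal.rpow_le_rpow (lintegral_mono' (Measure.restrict_mono hst le_rfl) le_rfl)
      (by positivity)

lemma LpNormE_const_mul {μ : Measure α} (g : α → ℝ≥0∞) {a : ℝ≥0∞} (ha : a ≠ ∞) {q : ℝ≥0∞}
    (hq : q ≠ 0) : LpNormE μ (fun x => a * g x) q = a * LpNormE μ g q := by
  rw [LpNormE, LpNormE]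
  split
  · exact ENNReal.essSup_const_mul
  · rename_i hqt
    have ht : 0 < q.toReal := ENNReal.toReal_pos hq hqt
    have h1 : ∀ x : α, (a * g x) ^ q.toReal = a ^ q.toReal * g x ^ q.toReal := fun x =>
      ENNReal.mul_rpow_of_nonneg _ _ ht.le
    simp only [h1]
    rw [lintegral_const_mul' _ _ (ENNReal.rpow_ne_top_of_nonneg ht.le ha),
      ENNReal.mul_rpow_of_nonneg _ _ (by positivity : (0:ℝ) ≤ 1 / q.toReal),
      ← ENNReal.rpow_mul, mul_one_div, div_self ht.ne', ENNReal.rpow_one]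

lemma LpNormE_iUnion_le {μ : Measure α} {S : ℕ → Set α} (hm : ∀ k, MeasurableSet (S k))
    (hd : Pairwise (Function.onFun Disjoint S)) (g : α → ℝ≥0∞) {q : ℝ≥0∞} (hq : 1 ≤ q) :
    LpNormE (μ.restrict (⋃ k, S k)) g q ≤ ∑' k, LpNormE (μ.restrict (S k)) g q := by
  rcases eq_or_ne q ∞ with rfl | hqt
  · simp only [LpNormE, reduceIte]
    refine essSup_le_of_ae_le _ ?_
    rw [Measure.restrict_iUnion hd hm]
    have : ∀ᵐ x ∂(Measure.sum fun k => μ.restrict (S k)),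
        g x ≤ ∑' k, essSup g (μ.restrict (S k)) := by
      rw [MeasureTheory.Measure.ae_sum_iff]
      intro k
      filter_upwards [ENNReal.ae_le_essSup (μ := μ.restrict (S k)) g] with x hx
      exact hx.trans (ENNReal.le_tsum k)
    exact this
  · have ht1 : 1 ≤ q.toReal := by
      have := ENNReal.toReal_mono hqt hq
      simpa using this
    have ht0 : 0 < q.toReal := lt_of_lt_of_le one_pos ht1
    simp only [LpNormE, if_neg hqt]
    rw [Measure.restrict_iUnion hd hm, lintegral_sum_measure]
    have h2 : 1 / q.toReal ≤ 1 := by rw [div_le_one ht0]; exact ht1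
    exact my_tsum_rpow_le _ (by positivity) h2

lemma my_div_mul_le {a b c C : ℝ≥0∞} (h : a / b * c ≤ C) (hb0 : b ≠ 0) (hbt : b ≠ ∞) :
    a * c ≤ C * b := by
  have h2 : a / b * c * b = a * c * (b⁻¹ * b) := by rw [div_eq_mul_inv]; ring
  calc a * c = a / b * c * b := by
        rw [h2, ENNReal.inv_mul_cancel hb0 hbt, mul_one]
    _ ≤ C * b := mul_le_mul_left h b

end AuxLemmas

section AuxLemmas2

open ENNReal

lemma Rn.nontrivial {n : ℕ} (hn : 1 ≤ n) : Nontrivial (Rn n) := by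
  haveI : Nonempty (Fin n) := ⟨⟨0, hn⟩⟩
  exact ⟨0, EuclideanSpace.single ⟨0, hn⟩ 1, by
    intro h
    have := congrArg (fun x : Rn n => x ⟨0, hn⟩) h.symm
    simp [EuclideanSpace.single_apply] at this⟩

lemma vol_ball_pos {n : ℕ} (c : Rn n) {r : ℝ} (hr : 0 < r) :
    volume (ball c r) ≠ 0 := (measure_ball_pos _ _ hr).ne'

lemma vol_ball_ne_top {n : ℕ} (c : Rn n) (r : ℝ) :
    volume (ball c r) ≠ ∞ := measure_ball_lt_top.ne

lemma vol_ball_rpow {n : ℕ} (hn : 1 ≤ n) (c : Rn n) {r : ℝ} (hr : 0 < r) (x : ℝ) :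
    (volume (ball c r)) ^ x
      = ENNReal.ofReal r ^ ((n : ℝ) * x) * (volume (ball (0 : Rn n) 1)) ^ x := by
  haveI := Rn.nontrivial hn
  rw [Measure.addHaar_ball volume c hr.le, finrank_euclideanSpace_fin,
    ENNReal.ofReal_pow hr.le,
    ENNReal.mul_rpow_of_ne_top (ENNReal.pow_ne_top ENNReal.ofReal_ne_top)
      (vol_ball_ne_top 0 1),
    ← ENNReal.rpow_natCast (ENNReal.ofReal r) n, ← ENNReal.rpow_mul]

lemma LpNormE_ball_eq {n : ℕ} (u : Rn n → ℝ≥0∞) {pp : ℝ≥0∞} (h1 : 1 ≤ pp)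
    (c : Rn n) {r : ℝ} (hr : 0 < r) :
    LpNormE (volume.restrict (ball c r)) u (conjE pp)
      = volume (ball c r) ^ (if pp = 1 then (0:ℝ) else (conjR pp)⁻¹) *
        (if pp = 1 then essSup u (volume.restrict (ball c r))
         else ((volume (ball c r))⁻¹ * ∫⁻ x in ball c r, u x ^ conjR pp) ^ (conjR pp)⁻¹) := by
  have hV0 : volume (ball c r) ≠ 0 := vol_ball_pos c hr
  have hVt : volume (ball c r) ≠ ∞ := vol_ball_ne_top c r
  by_cases hp1 : pp = 1
  · subst hp1
    simp [LpNormE, conjE]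
  · have htR : (conjE pp).toReal = conjR pp := conjE_toReal h1 hp1
    have ht0 : 0 < conjR pp := conjR_pos h1 hp1
    simp only [if_neg hp1, LpNormE, if_neg (conjE_ne_top hp1), htR]
    rw [ENNReal.mul_rpow_of_nonneg _ _ (by positivity : (0:ℝ) ≤ (conjR pp)⁻¹),
      ENNReal.inv_rpow, ← mul_assoc,
      ENNReal.mul_inv_cancel
        (by simp [ENNReal.rpow_eq_zero_iff, hV0, hVt])
        (ENNReal.rpow_ne_top_of_nonneg (by positivity) hVt),
      one_mul, one_div]

lemma essSup_pos_restrict {n : ℕ} {u : Rn n → ℝ≥0∞}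
    (hu : ∀ᵐ x ∂(volume : Measure (Rn n)), 0 < u x) {s : Set (Rn n)}
    (hs : volume s ≠ 0) : 0 < essSup u (volume.restrict s) := by
  by_contra h
  push_neg at h
  have h0 : essSup u (volume.restrict s) = 0 := le_antisymm h zero_le
  have h1 := ENNReal.ae_le_essSup (μ := volume.restrict s) u
  have h2 : ∀ᵐ x ∂volume.restrict s, 0 < u x := ae_restrict_of_ae hu
  have h3 : ∀ᵐ _x ∂volume.restrict s, False := by
    filter_upwards [h1, h2] with x hx1 hx2
    rw [h0] at hx1
    exact hx2.ne' (le_antisymm hx1 zero_le)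
  have h4 : volume.restrict s = 0 := by
    rw [← MeasureTheory.ae_eq_bot, ← Filter.eventually_false_iff_eq_bot]
    exact h3
  rw [Measure.restrict_eq_zero] at h4
  exact hs h4

lemma LpNormE_ball_pos {n : ℕ} {u : Rn n → ℝ≥0∞} (hu : Measurable u)
    (hfin : ∀ᵐ x ∂(volume : Measure (Rn n)), u x < ∞) {pp : ℝ≥0∞} (h1 : 1 ≤ pp)
    (c : Rn n) {r : ℝ} (hr : 0 < r) :
    0 < LpNormE (volume.restrict (ball c r)) (fun y => (u y)⁻¹) (conjE pp) := by
  by_cases hp1 : pp = 1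
  · subst hp1
    simp only [LpNormE, conjE, reduceIte]
    exact essSup_pos_restrict (hfin.mono fun x hx => ENNReal.inv_pos.mpr hx.ne)
      (vol_ball_pos c hr)
  · have htR : (conjE pp).toReal = conjR pp := conjE_toReal h1 hp1
    have ht0 : 0 < conjR pp := conjR_pos h1 hp1
    simp only [LpNormE, if_neg (conjE_ne_top hp1), htR]
    refine ENNReal.rpow_pos_of_nonneg ?_ (by positivity)
    have hmeas : Measurable fun x => (u x)⁻¹ ^ conjR pp :=
      (hu.inv).pow measurable_const
    rw [lintegral_pos_iff_support hmeas]
    have hsub : {x | u x ≠ ∞} ⊆ Function.support fun x => (u x)⁻¹ ^ conjR pp := by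
      intro x hx
      have hxne : (u x)⁻¹ ≠ 0 := by simpa [ENNReal.inv_eq_zero] using hx
      simp only [Function.mem_support]
      rw [Ne, ENNReal.rpow_eq_zero_iff]
      push_neg
      exact ⟨fun h => absurd h hxne, fun _ => ht0.le⟩
    have hnull : volume {x : Rn n | ¬ u x < ∞} = 0 := MeasureTheory.ae_iff.mp hfin
    refine lt_of_lt_of_le ?_ (measure_mono hsub)
    rw [Measure.restrict_apply' measurableSet_ball]
    have hb : volume (ball c r)
        ≤ volume ({x | u x ≠ ∞} ∩ ball c r) + volume {x : Rn n | ¬ u x < ∞} := by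
      refine le_trans (measure_mono ?_) (measure_union_le _ _)
      intro x hx
      by_cases hxx : u x < ∞
      · exact Or.inl ⟨hxx.ne, hx⟩
      · exact Or.inr hxx
    rw [hnull, add_zero] at hb
    exact lt_of_lt_of_le (measure_ball_pos _ _ hr) hb

end AuxLemmas2

section AuxLemmas3

open ENNReal

lemma my_rpow_ne_top {x : ℝ≥0∞} (hx0 : x ≠ 0) (hxt : x ≠ ∞) (y : ℝ) : x ^ y ≠ ∞ := by
  rw [Ne, ENNReal.rpow_eq_top_iff]
  push_neg
  exact ⟨fun h => absurd h hx0, fun h => absurd h hxt⟩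

lemma my_rpow_ne_zero {x : ℝ≥0∞} (hx0 : x ≠ 0) (hxt : x ≠ ∞) (y : ℝ) : x ^ y ≠ 0 := by
  rw [Ne, ENNReal.rpow_eq_zero_iff]
  push_neg
  exact ⟨fun h => absurd h hx0, fun h => absurd h hxt⟩

lemma global_annuli_le {n : ℕ} (u : Rn n → ℝ≥0∞) {q : ℝ≥0∞} (hq : 1 ≤ q)
    (c : Rn n) {R : ℝ} (hR : 0 < R) {η : ℝ} (hη : 0 < η) :
    LpNormE (volume.restrict (ball c R)ᶜ) (fun y => u y * edist c y ^ (-η)) q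
      ≤ ∑' k : ℕ, (ENNReal.ofReal (2 ^ k * R)) ^ (-η) *
          LpNormE (volume.restrict (ball c (2 ^ (k + 1) * R))) u q := by
  set S : ℕ → Set (Rn n) := fun k => ball c (2 ^ (k + 1) * R) \ ball c (2 ^ k * R) with hS
  have hmS : ∀ k, MeasurableSet (S k) := fun k => measurableSet_ball.diff measurableSet_ball
  have hdisj : Pairwise (Function.onFun Disjoint S) := by
    rw [pairwise_disjoint_on]
    intro a b hab
    have h1 : S a ⊆ ball c (2 ^ b * R) := by
      refine subset_trans diff_subset (ball_subset_ball ?_)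
      have h2 : (2:ℝ) ^ (a + 1) ≤ 2 ^ b := pow_le_pow_right₀ one_le_two hab
      nlinarith
    exact Disjoint.mono_left h1 disjoint_sdiff_self_right
  have hcover : (ball c R)ᶜ = ⋃ k, S k := by
    ext y
    simp only [mem_compl_iff, mem_iUnion, hS, mem_diff, mem_ball, not_lt]
    constructor
    · intro hy
      have hx1 : 1 ≤ dist y c / R := (one_le_div hR).mpr hy
      obtain ⟨k, hk1, hk2⟩ := exists_nat_pow_near hx1 one_lt_two
      refine ⟨k, ?_, ?_⟩
      · rw [div_lt_iff₀ hR] at hk2; linarith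
      · rw [le_div_iff₀ hR] at hk1; linarith
    · rintro ⟨k, _h1, h2⟩
      have h3 : (1:ℝ) ≤ 2 ^ k := one_le_pow₀ one_le_two
      nlinarith
  rw [hcover]
  refine le_trans (LpNormE_iUnion_le hmS hdisj _ hq) (ENNReal.tsum_le_tsum fun k => ?_)
  have hq0 : q ≠ 0 := (zero_lt_one.trans_le hq).ne'
  have hD : (ENNReal.ofReal (2 ^ k * R)) ^ (-η) ≠ ∞ :=
    my_rpow_ne_top (by simp [ENNReal.ofReal_eq_zero, not_le]; positivity)
      ENNReal.ofReal_ne_top _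
  calc LpNormE (volume.restrict (S k)) (fun y => u y * edist c y ^ (-η)) q
      ≤ LpNormE (volume.restrict (S k))
          (fun y => (ENNReal.ofReal (2 ^ k * R)) ^ (-η) * u y) q := by
        refine LpNormE_mono_ae ?_
        filter_upwards [ae_restrict_mem (hmS k)] with y hy
        have h2 : ENNReal.ofReal (2 ^ k * R) ≤ edist c y := by
          rw [edist_dist, dist_comm]
          refine ENNReal.ofReal_le_ofReal ?_
          have := hy.2
          simpa [mem_ball, not_lt] using this
        have h3 : edist c y ^ (-η) ≤ (ENNReal.ofReal (2 ^ k * R)) ^ (-η) := by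
          rw [ENNReal.rpow_neg, ENNReal.rpow_neg]
          exact ENNReal.inv_le_inv.mpr (ENNReal.rpow_le_rpow h2 hη.le)
        calc u y * edist c y ^ (-η)
            ≤ u y * (ENNReal.ofReal (2 ^ k * R)) ^ (-η) := mul_le_mul_right h3 _
          _ = (ENNReal.ofReal (2 ^ k * R)) ^ (-η) * u y := mul_comm _ _
    _ = (ENNReal.ofReal (2 ^ k * R)) ^ (-η) * LpNormE (volume.restrict (S k)) u q :=
        LpNormE_const_mul u hD hq0
    _ ≤ _ := mul_le_mul_right (LpNormE_mono_restrict diff_subset u q) _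

end AuxLemmas3

set_option maxHeartbeats 1000000 in
/-- Lemma 6.3: if `δ̃ < τ = (β - mn)(1 - 1/m) + δ/m` and `(w,v⃗)` satisfies the local
condition (with splitting `βᵢ = β/m`), then it satisfies the global condition. -/
theorem local_implies_global
    (n m : ℕ) (hn : 1 ≤ n) (hm : 1 ≤ m) (δ δt β : ℝ)
    (hβ0 : 0 < β) (hβ : β < (m : ℝ) * n)
    (hτ : δt < (β - (m : ℝ) * n) * (1 - 1 / m) + δ / m)
    (p : Fin m → ℝ≥0∞) (hp : ∀ i, 1 ≤ p i)
    (w : Rn n → ℝ≥0∞) (v : Fin m → Rn n → ℝ≥0∞)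
    (hw : IsWeight n w) (hv : ∀ i, IsWeight n (v i))
    (hloc : LocalCond n m δt β p w v) :
    GlobalCond n m δ δt (fun _ => β / m) p w v := by
  obtain ⟨Cl, hClt, hCl⟩ := hloc
  have hm0 : (0:ℝ) < m := by exact_mod_cast Nat.lt_of_lt_of_le Nat.zero_lt_one hm
  have hn0 : (0:ℝ) < n := by exact_mod_cast Nat.lt_of_lt_of_le Nat.zero_lt_one hn
  set P : ℝ := (∑ i, (p i)⁻¹).toReal with hP
  set σ : ℝ := δt / (n:ℝ) + P - β / (n:ℝ) with hσ
  set e : Fin m → ℝ := fun i => if p i = 1 then (0:ℝ) else (conjR (p i))⁻¹ with he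
  set E : ℝ := ∑ i, e i with hE
  have hPeq : P = ∑ i, ((p i)⁻¹).toReal := by
    rw [hP]
    exact ENNReal.toReal_sum fun i _ =>
      ENNReal.inv_ne_top.mpr (zero_lt_one.trans_le (hp i)).ne'
  have heval : ∀ i, e i = 1 - ((p i)⁻¹).toReal := by
    intro i
    rcases eq_or_ne (p i) 1 with h1 | h1
    · simp [he, h1]
    · rcases eq_or_ne (p i) ∞ with htop | htop
      · simp [he, h1, htop, conjR]
      · have hlt : 1 < (p i).toReal := by
          have := (ENNReal.toReal_lt_toReal (by simp) htop).mpr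
            (lt_of_le_of_ne (hp i) (Ne.symm h1))
          simpa using this
        simp only [he, if_neg h1, conjR, if_neg htop, ENNReal.toReal_inv]
        rw [inv_div]
        field_simp
    -- end heval
  have hEval : E = (m:ℝ) - P := by
    rw [hE, Finset.sum_congr rfl fun i _ => heval i, Finset.sum_sub_distrib,
      Finset.sum_const, Finset.card_univ, Fintype.card_fin, hPeq]
    simp [mul_comm]
  have hθc : (n:ℝ) * (E + σ) = (n:ℝ) * m + δt - β := by
    rw [hEval, hσ]
    field_simp
    ring
  set v1 : ℝ≥0∞ := volume (ball (0 : Rn n) 1) with hv1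
  have hv10 : v1 ≠ 0 := vol_ball_pos _ one_pos
  have hv1t : v1 ≠ ∞ := vol_ball_ne_top _ _
  -- rearranged local condition
  have hloc' : ∀ (c : Rn n) (r : ℝ), 0 < r →
      essSup w (volume.restrict (ball c r)) *
        ∏ i, (if p i = 1 then essSup (fun x => (v i x)⁻¹) (volume.restrict (ball c r))
          else ((volume (ball c r))⁻¹ * ∫⁻ x in ball c r, (v i x)⁻¹ ^ conjR (p i)) ^
            (conjR (p i))⁻¹)
        ≤ Cl * volume (ball c r) ^ σ := by
    intro c r hr
    exact my_div_mul_le (hCl c r hr)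
      (my_rpow_ne_zero (vol_ball_pos c hr) (vol_ball_ne_top c r) σ)
      (my_rpow_ne_top (vol_ball_pos c hr) (vol_ball_ne_top c r) σ)
  by_cases hcase : β - (m:ℝ) * n < δ
  · -- main case
    set η : ℝ := (n:ℝ) - β / m + δ / m with hηd
    have hηm : (m:ℝ) * η = (m:ℝ) * n - β + δ := by rw [hηd]; field_simp
    have hηpos : 0 < η := by nlinarith
    have hθc2 : (n:ℝ) * (E + σ) = (n:ℝ) * m + δt - β := hθc
    set θ : ℝ := (n:ℝ) * m + δt - β with hθd
    set t : ℝ := max θ 0 with htd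
    have hts : t - η < 0 := by
      rcases max_cases θ 0 with ⟨h1, _h2⟩ | ⟨h1, h2⟩
      · have h3 : θ - η = δt - ((β - (m:ℝ)*n) * (1 - 1/m) + δ/m) := by
          rw [hθd, hηd]; field_simp; ring
        have h4 : θ - η < 0 := by rw [h3]; linarith
        rw [htd, h1]; exact h4
      · rw [htd, h1]; linarith
    set ρ : ℝ≥0∞ := (2:ℝ≥0∞) ^ (t - η) with hρd
    have hρ1 : ρ < 1 := ENNReal.rpow_lt_one_of_one_lt_of_neg (by norm_num) hts
    have hSgeo : (∑' k : ℕ, ρ ^ k) ≠ ∞ := by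
      rw [ENNReal.tsum_geometric, Ne, ENNReal.inv_eq_top, tsub_eq_zero_iff_le]
      exact not_le.mpr hρ1
    set Γ : ℝ≥0∞ := (2:ℝ≥0∞) ^ t * v1 ^ (E + σ - (δt - δ)/(n:ℝ)) with hΓd
    have h2t : (2:ℝ≥0∞) ≠ ∞ := ENNReal.ofNat_ne_top
    have h20 : (2:ℝ≥0∞) ≠ 0 := two_ne_zero
    have hΓt : Γ ≠ ∞ := ENNReal.mul_ne_top (my_rpow_ne_top h20 h2t t)
      (my_rpow_ne_top hv10 hv1t _)
    refine ⟨Cl * Γ * (∑' k : ℕ, ρ ^ k) ^ m, ?_, ?_⟩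
    · exact ENNReal.mul_ne_top (ENNReal.mul_ne_top hClt hΓt) (ENNReal.pow_ne_top hSgeo)
    intro c R hR
    have hrk : ∀ k : ℕ, (0:ℝ) < 2 ^ k * R := fun k => by positivity
    set Bk : ℕ → Set (Rn n) := fun k => ball c (2 ^ k * R) with hBk
    set Vk : ℕ → ℝ≥0∞ := fun k => volume (Bk k) with hVk
    have hV0 : ∀ k, Vk k ≠ 0 := fun k => vol_ball_pos _ (hrk k)
    have hVt : ∀ k, Vk k ≠ ∞ := fun k => vol_ball_ne_top _ _
    set Wk : ℕ → ℝ≥0∞ := fun k => essSup w (volume.restrict (Bk k)) with hWk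
    set bk : Fin m → ℕ → ℝ≥0∞ := fun i k =>
      LpNormE (volume.restrict (Bk k)) (fun y => (v i y)⁻¹) (conjE (p i)) with hbk
    set D : ℕ → ℝ≥0∞ := fun k => (ENNReal.ofReal (2 ^ k * R)) ^ (-η) with hD
    set oR : ℝ≥0∞ := ENNReal.ofReal R with hoR
    have hoR0 : oR ≠ 0 := by rw [hoR]; simp [ENNReal.ofReal_eq_zero, not_le, hR]
    have hoRt : oR ≠ ∞ := by rw [hoR]; exact ENNReal.ofReal_ne_top
    have hB00 : ball c R = Bk 0 := by rw [hBk]; norm_num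
    have hbQ : ∀ i k, bk i k = Vk k ^ (e i) *
        (if p i = 1 then essSup (fun x => (v i x)⁻¹) (volume.restrict (Bk k))
          else ((Vk k)⁻¹ * ∫⁻ x in Bk k, (v i x)⁻¹ ^ conjR (p i)) ^ (conjR (p i))⁻¹) :=
      fun i k => LpNormE_ball_eq _ (hp i) _ (hrk k)
    have hbmono : ∀ (i : Fin m) {k l : ℕ}, k ≤ l → bk i k ≤ bk i l := fun i k l hkl =>
      LpNormE_mono_restrict (ball_subset_ball
        (mul_le_mul_of_nonneg_right (pow_le_pow_right₀ one_le_two hkl) hR.le)) _ _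
    have hWmono : ∀ {k l : ℕ}, k ≤ l → Wk k ≤ Wk l := fun {k l} hkl =>
      essSup_mono_measure' (Measure.restrict_mono (ball_subset_ball
        (mul_le_mul_of_nonneg_right (pow_le_pow_right₀ one_le_two hkl) hR.le)) le_rfl)
    have hVkpow : ∀ (k : ℕ) (x : ℝ),
        Vk k ^ x = (2:ℝ≥0∞) ^ ((k:ℝ) * ((n:ℝ) * x)) * (oR ^ ((n:ℝ) * x) * v1 ^ x) := by
      intro k x
      rw [hVk]
      simp only [hBk]
      rw [vol_ball_rpow hn _ (hrk k) x, ← hv1,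
        ENNReal.ofReal_mul (by positivity : (0:ℝ) ≤ 2 ^ k),
        ENNReal.ofReal_pow (by norm_num : (0:ℝ) ≤ 2), ENNReal.ofReal_ofNat, ← hoR,
        ENNReal.mul_rpow_of_ne_top (ENNReal.pow_ne_top h2t) hoRt,
        ← ENNReal.rpow_natCast (2:ℝ≥0∞) k, ← ENNReal.rpow_mul, mul_assoc]
    have hDeq : ∀ k : ℕ, D k = (2:ℝ≥0∞) ^ (-η * (k:ℝ)) * oR ^ (-η) := by
      intro k
      rw [hD]
      simp only []
      rw [ENNReal.ofReal_mul (by positivity : (0:ℝ) ≤ 2 ^ k),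
        ENNReal.ofReal_pow (by norm_num : (0:ℝ) ≤ 2), ENNReal.ofReal_ofNat, ← hoR,
        ENNReal.mul_rpow_of_ne_top (ENNReal.pow_ne_top h2t) hoRt,
        ← ENNReal.rpow_natCast (2:ℝ≥0∞) k, ← ENNReal.rpow_mul, mul_comm (k:ℝ) (-η)]
    have hstep1 : ∀ i, GlobalFactor n m δ (fun _ => β / (m:ℝ)) p v c R i
        ≤ ∑' k : ℕ, D k * bk i (k + 1) := by
      intro i
      have hGF : GlobalFactor n m δ (fun _ => β / (m:ℝ)) p v c R i
          = LpNormE (volume.restrict (ball c R)ᶜ)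
              (fun y => (v i y)⁻¹ * edist c y ^ (-η)) (conjE (p i)) := by
        rw [hηd]; rfl
      rw [hGF]
      exact global_annuli_le _ (one_le_conjE (hp i)) c hR hηpos
    have hstep2 : (∏ i, GlobalFactor n m δ (fun _ => β / (m:ℝ)) p v c R i)
        ≤ ∑' f : Fin m → ℕ, ∏ i, (D (f i) * bk i (f i + 1)) :=
      le_trans (Finset.prod_le_prod' fun i _ => hstep1 i)
        (le_of_eq (my_prod_tsum m fun i k => D k * bk i (k + 1)))
    have hfbound : ∀ f : Fin m → ℕ,
        Vk 0 ^ (-((δt - δ)/(n:ℝ))) * (Wk 0 * ∏ i, (D (f i) * bk i (f i + 1)))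
          ≤ Cl * Γ * ∏ i, ρ ^ (f i) := by
      intro f
      set K : ℕ := Finset.univ.sup f + 1 with hK
      have hfK : ∀ i, f i + 1 ≤ K := fun i =>
        Nat.succ_le_succ (Finset.le_sup (Finset.mem_univ i))
      have h2 : ∏ i, bk i K = Vk K ^ E *
          ∏ i, (if p i = 1 then essSup (fun x => (v i x)⁻¹) (volume.restrict (Bk K))
            else ((Vk K)⁻¹ * ∫⁻ x in Bk K, (v i x)⁻¹ ^ conjR (p i)) ^ (conjR (p i))⁻¹) := by
        rw [Finset.prod_congr rfl fun i _ => hbQ i K, Finset.prod_mul_distrib, hE,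
          my_rpow_sum (hV0 K) (hVt K)]
      have step3 : Wk 0 * ∏ i, (D (f i) * bk i (f i + 1))
          ≤ Cl * ((∏ i, D (f i)) * Vk K ^ (E + σ)) := by
        calc Wk 0 * ∏ i, (D (f i) * bk i (f i + 1))
            = (∏ i, D (f i)) * (Wk 0 * ∏ i, bk i (f i + 1)) := by
              rw [Finset.prod_mul_distrib]; ring
          _ ≤ (∏ i, D (f i)) * (Wk K * ∏ i, bk i K) :=
              mul_le_mul_right (mul_le_mul' (hWmono (Nat.zero_le K))
                (Finset.prod_le_prod' fun i _ => hbmono i (hfK i))) _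
          _ = (∏ i, D (f i)) * (Vk K ^ E * (Wk K *
              ∏ i, (if p i = 1 then essSup (fun x => (v i x)⁻¹) (volume.restrict (Bk K))
                else ((Vk K)⁻¹ * ∫⁻ x in Bk K, (v i x)⁻¹ ^ conjR (p i)) ^
                  (conjR (p i))⁻¹))) := by rw [h2]; ring
          _ ≤ (∏ i, D (f i)) * (Vk K ^ E * (Cl * Vk K ^ σ)) :=
              mul_le_mul_right (mul_le_mul_right (hloc' c (2 ^ K * R) (hrk K)) _) _
          _ = Cl * ((∏ i, D (f i)) * Vk K ^ (E + σ)) := by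
              rw [ENNReal.rpow_add _ _ (hV0 K) (hVt K)]; ring
      have hDprod : ∏ i, D (f i)
          = (2:ℝ≥0∞) ^ (-η * ((∑ i, f i : ℕ):ℝ)) * oR ^ (-η * (m:ℕ)) := by
        calc ∏ i, D (f i)
            = ∏ i, ((2:ℝ≥0∞) ^ (-η * ((f i : ℕ):ℝ)) * oR ^ (-η)) :=
              Finset.prod_congr rfl fun i _ => hDeq (f i)
          _ = (∏ i, (2:ℝ≥0∞) ^ (-η * ((f i : ℕ):ℝ))) * ∏ _i : Fin m, oR ^ (-η) :=
              Finset.prod_mul_distrib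
          _ = (2:ℝ≥0∞) ^ (∑ i, -η * ((f i : ℕ):ℝ)) * (oR ^ (-η)) ^ (m:ℕ) := by
              rw [← my_rpow_sum h20 h2t, Finset.prod_const, Finset.card_univ,
                Fintype.card_fin]
          _ = _ := by
              rw [← Finset.mul_sum, ← ENNReal.rpow_mul_natCast, ← Nat.cast_sum]
      have step4 : Vk 0 ^ (-((δt - δ)/(n:ℝ))) * (Cl * ((∏ i, D (f i)) * Vk K ^ (E + σ)))
          ≤ Cl * Γ * ∏ i, ρ ^ (f i) := by
        have hexp2 : ∏ i, ρ ^ (f i) = (2:ℝ≥0∞) ^ ((t - η) * ((∑ i, f i : ℕ):ℝ)) := by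
          rw [Finset.prod_pow_eq_pow_sum, hρd, ← ENNReal.rpow_mul_natCast]
        have hV0pow : Vk 0 ^ (-((δt - δ)/(n:ℝ)))
            = oR ^ ((n:ℝ) * (-((δt - δ)/(n:ℝ)))) * v1 ^ (-((δt - δ)/(n:ℝ))) := by
          rw [hVkpow 0 _]
          simp
        have hZ : (n:ℝ) * (-((δt - δ)/(n:ℝ))) + (-η * (m:ℕ)) + (n:ℝ) * (E + σ) = 0 := by
          have h5 : (n:ℝ) * (-((δt - δ)/(n:ℝ))) = -(δt - δ) := by field_simp
          rw [hθc]
          linear_combination h5 - hηm + hθd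
        have hexp : -η * ((∑ i, f i : ℕ):ℝ) + (K:ℝ) * ((n:ℝ) * (E + σ))
            ≤ t + (t - η) * ((∑ i, f i : ℕ):ℝ) := by
          have h6 : Finset.univ.sup f ≤ ∑ i, f i := Finset.sup_le fun i _ =>
            Finset.single_le_sum (fun j _ => Nat.zero_le _) (Finset.mem_univ i)
          have hK1 : (K:ℝ) ≤ ((∑ i, f i : ℕ):ℝ) + 1 := by
            rw [hK]
            have h7 := (Nat.cast_le (α := ℝ)).mpr h6
            push_cast at h7 ⊢
            linarith
          have hK0 : (0:ℝ) ≤ (K:ℝ) := Nat.cast_nonneg _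
          have hA : (n:ℝ) * (E + σ) ≤ t := by rw [hθc2, htd]; exact le_max_left _ _
          have p1 : (K:ℝ) * ((n:ℝ) * (E + σ)) ≤ (K:ℝ) * t :=
            mul_le_mul_of_nonneg_left hA hK0
          have p2 : (K:ℝ) * t ≤ (((∑ i, f i : ℕ):ℝ) + 1) * t :=
            mul_le_mul_of_nonneg_right hK1 (by rw [htd]; exact le_max_right _ _)
          linarith [p1, p2]
        calc Vk 0 ^ (-((δt - δ)/(n:ℝ))) * (Cl * ((∏ i, D (f i)) * Vk K ^ (E + σ)))
            = Cl * (((2:ℝ≥0∞) ^ (-η * ((∑ i, f i : ℕ):ℝ)) *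
                (2:ℝ≥0∞) ^ ((K:ℝ) * ((n:ℝ) * (E + σ)))) *
              ((oR ^ ((n:ℝ) * (-((δt - δ)/(n:ℝ)))) * oR ^ (-η * (m:ℕ)) *
                oR ^ ((n:ℝ) * (E + σ))) *
              (v1 ^ (-((δt - δ)/(n:ℝ))) * v1 ^ (E + σ)))) := by
              rw [hV0pow, hDprod, hVkpow K (E + σ)]
              ring
          _ = Cl * ((2:ℝ≥0∞) ^ (-η * ((∑ i, f i : ℕ):ℝ) + (K:ℝ) * ((n:ℝ) * (E + σ))) *
              (oR ^ ((n:ℝ) * (-((δt - δ)/(n:ℝ))) + (-η * (m:ℕ)) + (n:ℝ) * (E + σ)) *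
              v1 ^ (-((δt - δ)/(n:ℝ)) + (E + σ)))) := by
              rw [← ENNReal.rpow_add _ _ h20 h2t, ← ENNReal.rpow_add _ _ hoR0 hoRt,
                ← ENNReal.rpow_add _ _ hoR0 hoRt, ← ENNReal.rpow_add _ _ hv10 hv1t]
          _ = Cl * ((2:ℝ≥0∞) ^ (-η * ((∑ i, f i : ℕ):ℝ) + (K:ℝ) * ((n:ℝ) * (E + σ))) *
              v1 ^ (E + σ - (δt - δ)/(n:ℝ))) := by
              rw [hZ, ENNReal.rpow_zero, one_mul,
                show -((δt - δ)/(n:ℝ)) + (E + σ) = E + σ - (δt - δ)/(n:ℝ) by ring]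
          _ ≤ Cl * ((2:ℝ≥0∞) ^ (t + (t - η) * ((∑ i, f i : ℕ):ℝ)) *
              v1 ^ (E + σ - (δt - δ)/(n:ℝ))) := by
              refine mul_le_mul_right (mul_le_mul_left ?_ _) _
              exact ENNReal.rpow_le_rpow_of_exponent_le one_le_two hexp
          _ = Cl * Γ * ∏ i, ρ ^ (f i) := by
              rw [hexp2, hΓd, ENNReal.rpow_add _ _ h20 h2t]
              ring
      exact le_trans (mul_le_mul_right step3 _) step4
    calc essSup w (volume.restrict (ball c R)) /
          volume (ball c R) ^ ((δt - δ) / (n:ℝ)) *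
          ∏ i, GlobalFactor n m δ (fun _ => β / (m:ℝ)) p v c R i
        = Vk 0 ^ (-((δt - δ)/(n:ℝ))) *
            (Wk 0 * ∏ i, GlobalFactor n m δ (fun _ => β / (m:ℝ)) p v c R i) := by
          rw [hB00]
          simp only [hWk, hVk]
          rw [div_eq_mul_inv, ← ENNReal.rpow_neg]
          ring
      _ ≤ Vk 0 ^ (-((δt - δ)/(n:ℝ))) *
            (Wk 0 * ∑' f : Fin m → ℕ, ∏ i, (D (f i) * bk i (f i + 1))) :=
          mul_le_mul_right (mul_le_mul_right hstep2 _) _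
      _ = ∑' f : Fin m → ℕ, Vk 0 ^ (-((δt - δ)/(n:ℝ))) *
            (Wk 0 * ∏ i, (D (f i) * bk i (f i + 1))) := by
          rw [ENNReal.tsum_mul_left, ENNReal.tsum_mul_left]
      _ ≤ ∑' _f : Fin m → ℕ, Cl * Γ * ∏ i, ρ ^ (_f i) := ENNReal.tsum_le_tsum hfbound
      _ = Cl * Γ * ∑' f : Fin m → ℕ, ∏ i, ρ ^ (f i) := ENNReal.tsum_mul_left
      _ = Cl * Γ * (∑' k : ℕ, ρ ^ k) ^ m := by
          rw [← my_prod_tsum m fun _ k => ρ ^ k, Finset.prod_const, Finset.card_univ,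
            Fintype.card_fin]
  · -- degenerate case : contradiction with the existence of the weights
    exfalso
    push_neg at hcase
    have hθneg : (n:ℝ) * m + δt - β < 0 := by
      have e1 : (β - (m:ℝ) * n) * (1 - 1/m) + δ/m
          = (β - (m:ℝ)*n) + (δ - (β - (m:ℝ)*n))/m := by
        field_simp
        ring
      have e2 : (δ - (β - (m:ℝ)*n))/m ≤ 0 :=
        div_nonpos_iff.mpr (Or.inr ⟨by linarith, hm0.le⟩)
      nlinarith [hτ]
    have hrk : ∀ k : ℕ, (0:ℝ) < 2 ^ k := fun k => by positivity
    set Bk : ℕ → Set (Rn n) := fun k => ball (0 : Rn n) (2 ^ k) with hBk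
    set Vk : ℕ → ℝ≥0∞ := fun k => volume (Bk k) with hVk
    have hV0 : ∀ k, Vk k ≠ 0 := fun k => vol_ball_pos _ (hrk k)
    have hVt : ∀ k, Vk k ≠ ∞ := fun k => vol_ball_ne_top _ _
    set Wk : ℕ → ℝ≥0∞ := fun k => essSup w (volume.restrict (Bk k)) with hWk
    set bk : Fin m → ℕ → ℝ≥0∞ := fun i k =>
      LpNormE (volume.restrict (Bk k)) (fun y => (v i y)⁻¹) (conjE (p i)) with hbk
    have hbQ : ∀ i k, bk i k = Vk k ^ (e i) *
        (if p i = 1 then essSup (fun x => (v i x)⁻¹) (volume.restrict (Bk k))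
          else ((Vk k)⁻¹ * ∫⁻ x in Bk k, (v i x)⁻¹ ^ conjR (p i)) ^ (conjR (p i))⁻¹) :=
      fun i k => LpNormE_ball_eq _ (hp i) _ (hrk k)
    have hbmono : ∀ i, ∀ k : ℕ, bk i 0 ≤ bk i k := fun i k =>
      LpNormE_mono_restrict
        (ball_subset_ball (pow_le_pow_right₀ one_le_two (Nat.zero_le k))) _ _
    have hWmono : ∀ k : ℕ, Wk 0 ≤ Wk k := fun k =>
      essSup_mono_measure' (Measure.restrict_mono
        (ball_subset_ball (pow_le_pow_right₀ one_le_two (Nat.zero_le k))) le_rfl)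
    have hVkpow : ∀ (k : ℕ) (x : ℝ), Vk k ^ x = (2:ℝ≥0∞) ^ ((k:ℝ) * ((n:ℝ) * x)) * v1 ^ x := by
      intro k x
      rw [hVk]
      simp only []
      rw [hBk]
      simp only []
      rw [vol_ball_rpow hn _ (hrk k) x, ← hv1]
      congr 1
      rw [ENNReal.ofReal_pow (by norm_num : (0:ℝ) ≤ 2), ENNReal.ofReal_ofNat,
        ← ENNReal.rpow_natCast (2:ℝ≥0∞) k, ← ENNReal.rpow_mul]
    set θ : ℝ := (n:ℝ)*m + δt - β with hθd
    set r : ℝ≥0∞ := (2:ℝ≥0∞) ^ θ with hrd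
    have hr1 : r < 1 := ENNReal.rpow_lt_one_of_one_lt_of_neg (by norm_num) hθneg
    set M : ℝ≥0∞ := Cl * v1 ^ (E + σ) with hM
    have hMt : M ≠ ∞ := ENNReal.mul_ne_top hClt (my_rpow_ne_top hv10 hv1t _)
    have key : ∀ k : ℕ, Wk 0 * ∏ i, bk i 0 ≤ M * r ^ k := by
      intro k
      have h1 : Wk 0 * ∏ i, bk i 0 ≤ Wk k * ∏ i, bk i k :=
        mul_le_mul' (hWmono k) (Finset.prod_le_prod' fun i _ => hbmono i k)
      have h2 : ∏ i, bk i k = Vk k ^ E *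
          ∏ i, (if p i = 1 then essSup (fun x => (v i x)⁻¹) (volume.restrict (Bk k))
            else ((Vk k)⁻¹ * ∫⁻ x in Bk k, (v i x)⁻¹ ^ conjR (p i)) ^ (conjR (p i))⁻¹) := by
        rw [Finset.prod_congr rfl fun i _ => hbQ i k, Finset.prod_mul_distrib, hE,
          my_rpow_sum (hV0 k) (hVt k)]
      calc Wk 0 * ∏ i, bk i 0 ≤ Wk k * ∏ i, bk i k := h1
        _ = Vk k ^ E * (Wk k *
            ∏ i, (if p i = 1 then essSup (fun x => (v i x)⁻¹) (volume.restrict (Bk k))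
              else ((Vk k)⁻¹ * ∫⁻ x in Bk k, (v i x)⁻¹ ^ conjR (p i)) ^
                (conjR (p i))⁻¹)) := by rw [h2]; ring
        _ ≤ Vk k ^ E * (Cl * Vk k ^ σ) :=
            mul_le_mul_right (hloc' 0 (2 ^ k) (hrk k)) _
        _ = Cl * Vk k ^ (E + σ) := by
            rw [ENNReal.rpow_add _ _ (hV0 k) (hVt k)]; ring
        _ = M * r ^ k := by
            rw [hVkpow k (E + σ), hθc, hM, hrd,
              show (k:ℝ) * θ = θ * (k:ℕ) by push_cast; ring,
              ENNReal.rpow_mul_natCast]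
            ring
    have hA0 : 0 < Wk 0 * ∏ i, bk i 0 := by
      refine ENNReal.mul_pos ?_ ?_
      · exact (essSup_pos_restrict (hw.2.1.mono fun x hx => hx.1) (hV0 0)).ne'
      · refine (CanonicallyOrderedAdd.prod_pos.mpr fun i _ => ?_).ne'
        exact LpNormE_ball_pos (hv i).1 ((hv i).2.1.mono fun x hx => hx.2) (hp i) _ (hrk 0)
    have htend : Filter.Tendsto (fun k : ℕ => M * r ^ k) Filter.atTop (nhds 0) := by
      have h := ENNReal.Tendsto.const_mul (a := M)
        (ENNReal.tendsto_pow_atTop_nhds_zero_of_lt_one hr1) (Or.inr hMt)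
      simpa using h
    obtain ⟨k, hk⟩ := (htend.eventually_lt_const hA0).exists
    exact absurd (key k) (not_le.mpr hk)
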